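/- Schur function branching via q-integration: let λ be a partition with at most n-1 parts, y = (y₁,…,y_n), z = (z₁,…,z_{n-1}). Then s_λ(y)·∏_{1≤i<j≤n}(y_j-y_i) = ∏_{i=1}^{n-1} [λ_i+n-i]_q · ∫_{y₁ ≤ z₁ ≤ y₂ ≤ z₂ ≤ ⋯ ≤ z_{n-1} ≤ y_n} s_λ(z)·∏_{1≤i<j≤n-1}(z_j-z_i) d_q z₁ ⋯ d_q z_{n-1}, where the iterated q-integral integrates z_i from y_i to y_{i+1}. -/

import Mathlib

/-- The Jackson `q`-integral `∫_a^b f(x) d_q x`. -/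
noncomputable def qInt (q a b : ℝ) (f : ℝ → ℝ) : ℝ :=
  (1 - q) * ∑' i : ℕ, (f (b * q ^ i) * (b * q ^ i) - f (a * q ^ i) * (a * q ^ i))

/-- The `q`-integer `[m]_q = (1-q^m)/(1-q)`. -/
noncomputable def qNum (q : ℝ) (m : ℕ) : ℝ := (1 - q ^ m) / (1 - q)

/-- `s_λ(x) ∏_{i<j} (x_j - x_i)`, via the bialternant formula:
`s_λ(x₁,…,x_n) ∏_{1≤i<j≤n} (x_j-x_i) = (-1)^{C(n,2)} det(x_j^{λ_i + n - 1 - i})`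
(indices 0-indexed). -/
noncomputable def schurDelta (n : ℕ) (lam : Fin n → ℕ) (x : Fin n → ℝ) : ℝ :=
  (-1 : ℝ) ^ n.choose 2 *
    Matrix.det (Matrix.of fun i j : Fin n => x j ^ (lam i + (n - 1 - (i : ℕ))))

/-- Iterated `q`-integral with independent bounds: `nestedInt q lo hi g k z` integrates
the variables with indices `0, …, k-1` (index `0` innermost), variable `i` running
from `lo i` to `hi i`. -/
noncomputable def nestedInt (q : ℝ) {k : ℕ} (lo hi : Fin k → ℝ)
    (g : (Fin k → ℝ) → ℝ) : ℕ → (Fin k → ℝ) → ℝ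
  | 0, z => g z
  | (j + 1), z =>
    if h : j < k then
      qInt q (lo ⟨j, h⟩) (hi ⟨j, h⟩)
        (fun u => nestedInt q lo hi g j (Function.update z ⟨j, h⟩ u))
    else nestedInt q lo hi g j z

/- ### Auxiliary lemmas -/

/-- `q`-integral of the monomial `u^p` from `a` to `b`. -/
noncomputable def monoInt (q a b : ℝ) (p : ℕ) : ℝ :=
  (b ^ (p + 1) - a ^ (p + 1)) * ((1 - q) / (1 - q ^ (p + 1)))

lemma qpow_lt_one {q : ℝ} (hq0 : 0 < q) (hq1 : q < 1) (p : ℕ) (hp : p ≠ 0) : q ^ p < 1 :=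
  pow_lt_one₀ hq0.le hq1 hp

lemma term_eq (q a b : ℝ) (C : ℝ) (p : ℕ) (i : ℕ) :
    C * (b * q ^ i) ^ p * (b * q ^ i) - C * (a * q ^ i) ^ p * (a * q ^ i)
      = (C * b ^ (p+1) - C * a ^ (p+1)) * (q ^ (p+1)) ^ i := by
  ring

lemma summable_mono_term (q a b : ℝ) (hq0 : 0 < q) (hq1 : q < 1) (C : ℝ) (p : ℕ) :
    Summable (fun i : ℕ =>
      C * (b * q ^ i) ^ p * (b * q ^ i) - C * (a * q ^ i) ^ p * (a * q ^ i)) := by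
  simp only [term_eq]
  exact (summable_geometric_of_lt_one (by positivity)
    (qpow_lt_one hq0 hq1 (p+1) (Nat.succ_ne_zero p))).mul_left _

lemma qInt_mono (q a b : ℝ) (hq0 : 0 < q) (hq1 : q < 1) (C : ℝ) (p : ℕ) :
    qInt q a b (fun u => C * u ^ p) = C * monoInt q a b p := by
  have h1 : q ^ (p+1) < 1 := qpow_lt_one hq0 hq1 (p+1) (Nat.succ_ne_zero p)
  have h1' : (1 : ℝ) - q ^ (p+1) ≠ 0 := by nlinarith
  simp only [qInt, term_eq, tsum_mul_left,
    tsum_geometric_of_lt_one (by positivity : (0:ℝ) ≤ q ^ (p+1)) h1]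
  rw [monoInt]
  field_simp

lemma qInt_sum {ι : Type*} [Fintype ι] (q a b : ℝ) (hq0 : 0 < q) (hq1 : q < 1)
    (C : ι → ℝ) (p : ι → ℕ) :
    qInt q a b (fun u => ∑ s : ι, C s * u ^ p s)
      = ∑ s : ι, C s * monoInt q a b (p s) := by
  have key : qInt q a b (fun u => ∑ s : ι, C s * u ^ p s)
      = ∑ s : ι, qInt q a b (fun u => C s * u ^ p s) := by
    simp only [qInt, Finset.sum_mul, ← Finset.sum_sub_distrib]
    rw [Summable.tsum_finsetSum (fun s _ => summable_mono_term q a b hq0 hq1 (C s) (p s)), Finset.mul_sum]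
  rw [key]
  exact Finset.sum_congr rfl fun s _ => qInt_mono q a b hq0 hq1 (C s) (p s)

lemma qNum_mul_monoInt (q a b : ℝ) (hq0 : 0 < q) (hq1 : q < 1) (p : ℕ) :
    qNum q (p+1) * monoInt q a b p = b^(p+1) - a^(p+1) := by
  have h1 : q ^ (p+1) < 1 := qpow_lt_one hq0 hq1 _ (Nat.succ_ne_zero p)
  have h1' : (1:ℝ) - q^(p+1) ≠ 0 := by nlinarith
  have h2 : (1:ℝ) - q ≠ 0 := by nlinarith
  rw [qNum, monoInt]
  field_simp

lemma nestedInt_sum_mono {k : ℕ} (q : ℝ) (hq0 : 0 < q) (hq1 : q < 1)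
    (lo hi : Fin k → ℝ) {ι : Type*} [Fintype ι] (C : ι → ℝ) (e : ι → Fin k → ℕ) :
    ∀ (m : ℕ), m ≤ k → ∀ z : Fin k → ℝ,
    nestedInt q lo hi (fun z => ∑ s : ι, C s * ∏ j : Fin k, z j ^ e s j) m z
      = ∑ s : ι, C s * ∏ j : Fin k,
          (if (j : ℕ) < m then monoInt q (lo j) (hi j) (e s j) else z j ^ e s j) := by
  intro m
  induction m with
  | zero => intro _ z; simp [nestedInt]
  | succ m IH =>
    intro hm z
    have h : m < k := hm
    set J : Fin k := ⟨m, h⟩ with hJ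
    have hstep : nestedInt q lo hi
        (fun z => ∑ s : ι, C s * ∏ j : Fin k, z j ^ e s j) (m+1) z
        = qInt q (lo J) (hi J) (fun u =>
            nestedInt q lo hi (fun z => ∑ s : ι, C s * ∏ j : Fin k, z j ^ e s j) m
              (Function.update z J u)) := by
      rw [nestedInt, dif_pos h]
    rw [hstep]
    have hinner : (fun u => nestedInt q lo hi
          (fun z => ∑ s : ι, C s * ∏ j : Fin k, z j ^ e s j) m (Function.update z J u))
        = fun u => ∑ s : ι,
            (C s * ∏ j ∈ Finset.univ.erase J,
              (if (j : ℕ) < m then monoInt q (lo j) (hi j) (e s j) else z j ^ e s j))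
              * u ^ (e s J) := by
      funext u
      rw [IH (le_of_lt h) (Function.update z J u)]
      refine Finset.sum_congr rfl fun s _ => ?_
      rw [← Finset.mul_prod_erase Finset.univ _ (Finset.mem_univ J)]
      have hJfac : (if (J : ℕ) < m then monoInt q (lo J) (hi J) (e s J)
          else (Function.update z J u) J ^ e s J) = u ^ e s J := by
        rw [if_neg (by simp [hJ]), Function.update_self]
      rw [hJfac]
      have : ∀ j ∈ Finset.univ.erase J,
          (if (j : ℕ) < m then monoInt q (lo j) (hi j) (e s j)
            else (Function.update z J u) j ^ e s j)
          = (if (j : ℕ) < m then monoInt q (lo j) (hi j) (e s j) else z j ^ e s j) := by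
        intro j hj
        rw [Function.update_of_ne (Finset.ne_of_mem_erase hj)]
      rw [Finset.prod_congr rfl this]
      ring
    rw [hinner, qInt_sum q (lo J) (hi J) hq0 hq1]
    refine Finset.sum_congr rfl fun s _ => ?_
    rw [← Finset.mul_prod_erase Finset.univ
      (fun j : Fin k => if (j : ℕ) < m + 1 then monoInt q (lo j) (hi j) (e s j) else z j ^ e s j)
      (Finset.mem_univ J)]
    have hJfac : (if (J : ℕ) < m + 1 then monoInt q (lo J) (hi J) (e s J)
        else z J ^ e s J) = monoInt q (lo J) (hi J) (e s J) := by
      rw [if_pos (by simp [hJ])]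
    rw [hJfac]
    have : ∀ j ∈ Finset.univ.erase J,
        (if (j : ℕ) < m + 1 then monoInt q (lo j) (hi j) (e s j) else z j ^ e s j)
        = (if (j : ℕ) < m then monoInt q (lo j) (hi j) (e s j) else z j ^ e s j) := by
      intro j hj
      have hne : (j : ℕ) ≠ m := by
        intro hc
        exact Finset.ne_of_mem_erase hj (Fin.ext hc)
      exact if_congr (by omega) rfl rfl
    rw [Finset.prod_congr rfl this]
    ring

lemma neg_one_shuffle (s P : ℝ) (m c : ℕ) :
    (-1:ℝ)^(m + c) * ((-1:ℝ)^m * (s * P)) = ((-1:ℝ)^c * s) * P := by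
  have hsq : ((-1:ℝ))^m * (-1)^m = 1 := by
    rw [← pow_add, ← two_mul, pow_mul]; norm_num
  calc (-1:ℝ)^(m + c) * ((-1:ℝ)^m * (s * P))
      = ((-1:ℝ)^m * (-1:ℝ)^m) * (((-1:ℝ)^c * s) * P) := by rw [pow_add]; ring
    _ = ((-1:ℝ)^c * s) * P := by rw [hsq, one_mul]

lemma det_diff {m : ℕ} (E : Fin (m+1) → ℕ) (hE : E (Fin.last m) = 0) (x : Fin (m+1) → ℝ) :
    Matrix.det (Matrix.of fun i j : Fin (m+1) => x j ^ E i)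
      = (-1 : ℝ)^m * Matrix.det (Matrix.of fun i j : Fin m =>
          x j.succ ^ E i.castSucc - x j.castSucc ^ E i.castSucc) := by
  set M : Matrix (Fin (m+1)) (Fin (m+1)) ℝ :=
    Matrix.of fun i j : Fin (m+1) => x j ^ E i with hM
  set N : Matrix (Fin (m+1)) (Fin (m+1)) ℝ :=
    Matrix.of (fun i j : Fin (m+1) =>
      Fin.cases (M i 0) (fun j' => M i j'.succ - M i j'.castSucc) j) with hN
  have h1 : M.det = N.det := by
    apply Matrix.det_eq_of_forall_col_eq_smul_add_pred (fun _ => (1 : ℝ))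
    · intro i; simp [hN]
    · intro i j; simp [hN]
  have hNlast : ∀ j : Fin (m+1), j ≠ 0 → N (Fin.last m) j = 0 := by
    intro j hj
    obtain ⟨j', rfl⟩ := Fin.eq_succ_of_ne_zero hj
    simp [hN, hM, hE]
  have hN0 : N (Fin.last m) 0 = 1 := by simp [hN, hM, hE]
  rw [h1, Matrix.det_succ_row N (Fin.last m)]
  rw [Finset.sum_eq_single (0 : Fin (m+1))]
  · rw [hN0]
    have hsub : (N.submatrix (Fin.last m).succAbove (0 : Fin (m+1)).succAbove)
        = Matrix.of (fun i j : Fin m =>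
            x j.succ ^ E i.castSucc - x j.castSucc ^ E i.castSucc) := by
      ext i j
      simp [Matrix.submatrix, hN, hM, Fin.succAbove_last, Fin.zero_succAbove]
    rw [hsub]
    simp [Fin.last]
  · intro j _ hj
    rw [hNlast j hj]; ring
  · intro h; exact absurd (Finset.mem_univ _) h

/-- Schur function branching via `q`-integration: for a partition `λ` with at most
`n-1` parts, `s_λ(y) ∏_{i<j}(y_j-y_i)` equals `∏_{i=1}^{n-1} [λ_i+n-i]_q` times the
iterated `q`-integral, over `y₁ ≤ z₁ ≤ y₂ ≤ ⋯ ≤ z_{n-1} ≤ y_n` (each `z_i` from `y_i`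
to `y_{i+1}`), of `s_λ(z) ∏_{i<j}(z_j-z_i)`. -/
theorem stmt17 (n : ℕ) (hn : 1 ≤ n) (lam : Fin n → ℕ) (hanti : Antitone lam)
    (hlast : lam ⟨n - 1, by omega⟩ = 0) (y : Fin n → ℝ) (q : ℝ)
    (hq0 : 0 < q) (hq1 : q < 1) :
    schurDelta n lam y =
      (∏ j : Fin (n - 1), qNum q (lam (Fin.castLE (by omega) j) + (n - 1 - (j : ℕ)))) *
        nestedInt q (fun i : Fin (n - 1) => y (Fin.castLE (by omega) i))
          (fun i : Fin (n - 1) => y ⟨(i : ℕ) + 1, by have := i.isLt; omega⟩)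
          (fun z => schurDelta (n - 1) (fun j => lam (Fin.castLE (by omega) j)) z)
          (n - 1) (fun _ => 0) := by
  classical
  obtain ⟨m, rfl⟩ : ∃ m, n = m + 1 := ⟨n - 1, by omega⟩
  have hle : m ≤ m + 1 := by omega
  show schurDelta (m+1) lam y =
      (∏ j : Fin m, qNum q (lam (Fin.castLE hle j) + (m - (j : ℕ)))) *
        nestedInt q (fun i : Fin m => y (Fin.castLE hle i))
          (fun i : Fin m => y (Fin.succ i))
          (fun z => schurDelta m (fun j => lam (Fin.castLE hle j)) z)
          m (fun _ => 0)
  set lam' : Fin m → ℕ := fun j => lam (Fin.castLE hle j) with hlam'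
  set lo : Fin m → ℝ := fun i => y (Fin.castLE hle i) with hlo
  set hi : Fin m → ℝ := fun i => y (Fin.succ i) with hhi
  set C : Equiv.Perm (Fin m) → ℝ :=
    fun σ => (-1:ℝ)^(m.choose 2) * ((Equiv.Perm.sign σ : ℤ) : ℝ) with hC
  set e : Equiv.Perm (Fin m) → Fin m → ℕ :=
    fun σ j => lam' (σ j) + (m - 1 - (σ j : ℕ)) with he
  -- expand the integrand as a sum of monomials
  have hg : (fun z : Fin m → ℝ => schurDelta m lam' z)
      = fun z => ∑ σ : Equiv.Perm (Fin m), C σ * ∏ j : Fin m, z j ^ e σ j := by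
    funext z
    rw [schurDelta, Matrix.det_apply', Finset.mul_sum]
    refine Finset.sum_congr rfl fun σ _ => ?_
    simp only [Matrix.of_apply, hC, he]
    ring
  rw [hg, nestedInt_sum_mono q hq0 hq1 lo hi C e m le_rfl]
  have hite : ∀ (σ : Equiv.Perm (Fin m)),
      (∏ j : Fin m, if (j:ℕ) < m then monoInt q (lo j) (hi j) (e σ j)
        else (fun _ : Fin m => (0:ℝ)) j ^ e σ j)
      = ∏ j : Fin m, monoInt q (lo j) (hi j) (e σ j) :=
    fun σ => Finset.prod_congr rfl fun j _ => if_pos j.isLt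
  -- rewrite the RHS
  have hRHS : ((∏ j : Fin m, qNum q (lam' j + (m - (j:ℕ)))) *
      ∑ σ : Equiv.Perm (Fin m), C σ *
        ∏ j : Fin m, (if (j:ℕ) < m then monoInt q (lo j) (hi j) (e σ j)
          else (fun _ : Fin m => (0:ℝ)) j ^ e σ j))
      = ∑ σ : Equiv.Perm (Fin m), C σ * ∏ j : Fin m,
          ((hi j) ^ (lam' (σ j) + (m - ((σ j) : ℕ)))
            - (lo j) ^ (lam' (σ j) + (m - ((σ j) : ℕ)))) := by
    rw [Finset.mul_sum]
    refine Finset.sum_congr rfl fun σ _ => ?_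
    rw [hite σ, ← Equiv.prod_comp σ (fun j => qNum q (lam' j + (m - (j:ℕ)))),
      mul_left_comm, ← Finset.prod_mul_distrib]
    refine congrArg (fun t => C σ * t) (Finset.prod_congr rfl fun j _ => ?_)
    have hco : lam' (σ j) + (m - ((σ j):ℕ)) = (e σ j) + 1 := by
      have := (σ j).isLt
      simp only [he]
      omega
    rw [hco, qNum_mul_monoInt q (lo j) (hi j) hq0 hq1]
  rw [hRHS]
  -- rewrite the LHS using column operations
  have hE0 : (fun i : Fin (m+1) => lam i + (m + 1 - 1 - (i:ℕ))) (Fin.last m) = 0 := by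
    show lam (Fin.last m) + (m + 1 - 1 - ((Fin.last m : Fin (m+1)) : ℕ)) = 0
    have h0 : lam (Fin.last m) = 0 := hlast
    simp only [Fin.val_last]
    omega
  rw [schurDelta, det_diff (fun i : Fin (m+1) => lam i + (m + 1 - 1 - (i:ℕ))) hE0 y]
  rw [Matrix.det_apply', Finset.mul_sum, Finset.mul_sum]
  refine Finset.sum_congr rfl fun σ _ => ?_
  have hprod : (∏ j : Fin m, (Matrix.of fun i j : Fin m =>
        y j.succ ^ (lam i.castSucc + (m + 1 - 1 - ((i.castSucc):ℕ)))
          - y j.castSucc ^ (lam i.castSucc + (m + 1 - 1 - ((i.castSucc):ℕ)))) (σ j) j)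
      = ∏ j : Fin m, ((hi j) ^ (lam' (σ j) + (m - ((σ j) : ℕ)))
          - (lo j) ^ (lam' (σ j) + (m - ((σ j) : ℕ)))) := by
    refine Finset.prod_congr rfl fun j _ => ?_
    have h1 : (Fin.castSucc (σ j)) = Fin.castLE hle (σ j) := rfl
    have h2 : y (Fin.castSucc j) = lo j := rfl
    have h3 : y (Fin.succ j) = hi j := rfl
    have h4 : lam (Fin.castSucc (σ j)) + (m + 1 - 1 - ((Fin.castSucc (σ j)):ℕ))
        = lam' (σ j) + (m - ((σ j):ℕ)) := by
      rw [h1]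
      simp only [hlam', Fin.coe_castLE]
      omega
    simp only [Matrix.of_apply, h2, h3, h4]
  rw [hprod]
  have hchoose : (m+1).choose 2 = m + m.choose 2 := by
    rw [Nat.choose_succ_succ, Nat.choose_one_right]
  rw [hchoose]
  simp only [hC]
  exact neg_one_shuffle _ _ m (m.choose 2)
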